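/- arXiv:1001.2033 — 4 statements merged into one kernel-verified Lean document; each statement's English description precedes it below -/
import Mathlib

section
/- Let p_a(y,y',t) = (e^{-t/4}/√(4πt)) · (yy')^{1/2} · (exp(-(log(y/y'))²/(4t)) - exp(-(log(yy') - log(a²))²/(4t))) for y, y' ≥ a > 1. Then ∫_1^∞ (p_a(y,y,t) - p_1(y,y,t)) y^{-2} dy = -(e^{-t/4}/√(4πt)) · log a, where p_a(y,y',t) is extended by 0 for y < a or y' < a. -/
open MeasureTheory

/-- The Dirichlet heat kernel of `-y² ∂_y²` on `[a,∞)` with respect to `y⁻² dy`,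
extended by `0` for `y < a` or `y' < a`. -/
noncomputable def cuspHeatKernel (a y y' t : ℝ) : ℝ :=
  if a ≤ y ∧ a ≤ y' then
    (Real.exp (-t / 4) / Real.sqrt (4 * Real.pi * t)) * Real.sqrt (y * y') *
      (Real.exp (-(Real.log (y / y')) ^ 2 / (4 * t)) -
        Real.exp (-(Real.log (y * y') - Real.log (a ^ 2)) ^ 2 / (4 * t)))
  else 0

/-- Closed form of the diagonal of the kernel, valid for all `y > 0`. -/
theorem cusp_diag (a y t : ℝ) (hy : 0 < y) (ht : 0 < t) :
    cuspHeatKernel a y y t =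
      (Real.exp (-t / 4) / Real.sqrt (4 * Real.pi * t)) * y *
        (1 - Real.exp (-(Real.log (max y a) - Real.log a) ^ 2 / t)) := by
  unfold cuspHeatKernel
  by_cases h : a ≤ y
  · rw [if_pos ⟨h, h⟩, max_eq_left h, Real.sqrt_mul_self hy.le, div_self hy.ne',
      Real.log_one, Real.log_mul hy.ne' hy.ne', Real.log_pow,
      show -(0:ℝ)^2/(4*t) = 0 by ring, Real.exp_zero,
      show -(Real.log y + Real.log y - ((2:ℕ):ℝ)*Real.log a)^2/(4*t)
          = -(Real.log y - Real.log a)^2/t from by push_cast; field_simp; ring]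
  · rw [if_neg (by tauto), max_eq_right (le_of_not_ge h), sub_self,
      show -(0:ℝ)^2/t = 0 by ring, Real.exp_zero, sub_self, mul_zero]

theorem exp_image_Ioi_zero : Real.exp '' Set.Ioi (0:ℝ) = Set.Ioi 1 := by
  ext y
  constructor
  · rintro ⟨x, hx, rfl⟩
    exact Real.one_lt_exp_iff.mpr hx
  · intro hy
    exact ⟨Real.log y, Real.log_pos hy, Real.exp_log (lt_trans one_pos hy)⟩

/-- The relative heat trace of `e^{-tΔ_{a,0}} - e^{-tΔ_{1,0}}` on `L²([1,∞), y⁻²dy)`. -/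
theorem relative_heat_trace_cusp (a t : ℝ) (ha : 1 < a) (ht : 0 < t) :
    (∫ y in Set.Ioi (1:ℝ), (cuspHeatKernel a y y t - cuspHeatKernel 1 y y t) / y ^ 2) =
      -(Real.exp (-t / 4) / Real.sqrt (4 * Real.pi * t)) * Real.log a := by
  set C := Real.exp (-t / 4) / Real.sqrt (4 * Real.pi * t) with hC
  have hla0 : 0 < Real.log a := Real.log_pos ha
  have ha0 : (0:ℝ) < a := lt_trans one_pos ha
  have hcv := integral_image_eq_integral_abs_deriv_smul (s := Set.Ioi (0:ℝ))
    (f := Real.exp) (f' := Real.exp) measurableSet_Ioi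
    (fun x _ => (Real.hasDerivAt_exp x).hasDerivWithinAt)
    (Real.exp_injective.injOn)
    (fun y => (cuspHeatKernel a y y t - cuspHeatKernel 1 y y t) / y ^ 2)
  rw [exp_image_Ioi_zero] at hcv
  rw [hcv]
  have hmono : Monotone Real.exp := fun _ _ h => Real.exp_le_exp.mpr h
  have key : ∀ x ∈ Set.Ioi (0:ℝ),
      |Real.exp x| • ((cuspHeatKernel a (Real.exp x) (Real.exp x) t
          - cuspHeatKernel 1 (Real.exp x) (Real.exp x) t) / (Real.exp x) ^ 2)
      = C * (Real.exp (-(x^2)/t) - Real.exp (-(max x (Real.log a) - Real.log a)^2/t)) := by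
    intro x hx
    have hex : (0:ℝ) < Real.exp x := Real.exp_pos x
    rw [cusp_diag a _ t hex ht, cusp_diag 1 _ t hex ht, abs_of_pos hex, smul_eq_mul]
    have hmax1 : max (Real.exp x) 1 = Real.exp x :=
      max_eq_left (Real.one_lt_exp_iff.mpr hx).le
    have hmaxa : max (Real.exp x) a = Real.exp (max x (Real.log a)) := by
      nth_rewrite 1 [← Real.exp_log ha0]
      exact (hmono.map_max).symm
    rw [hmax1, hmaxa, Real.log_exp, Real.log_exp, Real.log_one, sub_zero, ← hC]
    field_simp
    ring
  rw [setIntegral_congr_fun measurableSet_Ioi key]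
  have hF : Integrable (fun x : ℝ => Real.exp (-(x^2)/t)) := by
    have h := integrable_exp_neg_mul_sq (b := 1/t) (by positivity)
    refine h.congr ?_
    filter_upwards with x
    congr 1
    ring
  have hG1 : IntegrableOn (fun x : ℝ => Real.exp (-(max x (Real.log a) - Real.log a)^2/t))
      (Set.Ioc 0 (Real.log a)) := by
    refine (integrableOn_const (s := Set.Ioc 0 (Real.log a)) (μ := volume) (C := (1:ℝ)) measure_Ioc_lt_top.ne).congr_fun
      (fun x hx => ?_) measurableSet_Ioc
    rw [max_eq_right hx.2]
    simp
  have hG2 : IntegrableOn (fun x : ℝ => Real.exp (-(max x (Real.log a) - Real.log a)^2/t))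
      (Set.Ioi (Real.log a)) := by
    refine ((hF.comp_sub_right (Real.log a)).integrableOn).congr_fun
      (fun x hx => ?_) measurableSet_Ioi
    rw [max_eq_left (le_of_lt hx)]
  have hG : IntegrableOn (fun x : ℝ => Real.exp (-(max x (Real.log a) - Real.log a)^2/t))
      (Set.Ioi 0) := by
    rw [show Set.Ioi (0:ℝ) = Set.Ioc 0 (Real.log a) ∪ Set.Ioi (Real.log a) from
      (Set.Ioc_union_Ioi_eq_Ioi hla0.le).symm]
    exact hG1.union hG2
  rw [show (∫ x in Set.Ioi (0:ℝ),
      C * (Real.exp (-(x^2)/t) - Real.exp (-(max x (Real.log a) - Real.log a)^2/t)))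
      = C * ((∫ x in Set.Ioi (0:ℝ), Real.exp (-(x^2)/t))
        - ∫ x in Set.Ioi (0:ℝ), Real.exp (-(max x (Real.log a) - Real.log a)^2/t)) from by
    rw [integral_const_mul, integral_sub hF.integrableOn hG]]
  have hshift : (∫ x in Set.Ioi (Real.log a), Real.exp (-((x - Real.log a)^2)/t))
      = ∫ x in Set.Ioi (0:ℝ), Real.exp (-(x^2)/t) := by
    rw [← integral_indicator measurableSet_Ioi, ← integral_indicator measurableSet_Ioi,
      show (Set.Ioi (Real.log a)).indicator (fun x => Real.exp (-((x - Real.log a)^2)/t))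
        = fun x => (Set.Ioi (0:ℝ)).indicator (fun x => Real.exp (-(x^2)/t)) (x - Real.log a) from by
        funext x
        by_cases h : Real.log a < x <;>
          simp [Set.indicator_apply, Set.mem_Ioi, sub_pos, h]]
    exact integral_sub_right_eq_self ((Set.Ioi (0:ℝ)).indicator fun x => Real.exp (-(x^2)/t))
      (Real.log a)
  have hGval : (∫ x in Set.Ioi (0:ℝ), Real.exp (-(max x (Real.log a) - Real.log a)^2/t))
      = Real.log a + ∫ x in Set.Ioi (0:ℝ), Real.exp (-(x^2)/t) := by
    nth_rewrite 1 [show Set.Ioi (0:ℝ) = Set.Ioc 0 (Real.log a) ∪ Set.Ioi (Real.log a) from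
        (Set.Ioc_union_Ioi_eq_Ioi hla0.le).symm]
    rw [setIntegral_union (Set.Ioc_disjoint_Ioi le_rfl) measurableSet_Ioi hG1 hG2]
    congr 1
    · rw [setIntegral_congr_fun measurableSet_Ioc
        (g := fun _ => (1:ℝ)) (fun x hx => by rw [max_eq_right hx.2]; simp),
        setIntegral_const, Real.volume_real_Ioc, smul_eq_mul, mul_one,
        max_eq_left (by linarith), sub_zero]
    · rw [← hshift]
      refine setIntegral_congr_fun measurableSet_Ioi (fun x hx => ?_)
      rw [max_eq_left (le_of_lt hx)]
  rw [hGval]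
  ring
end

section
/- With p_a as above, for a > 1 and t > 0, ∫_a^∞ (p_a(y,y,t) - p_1(y,y,t)) y^{-2} dy = -(e^{-t/4}/√(4πt)) · ∫_1^a y^{-1} exp(-(log y)²/t) dy = -(e^{-t/4}/√(4π)) · Erf(log(a)/√t), where Erf(s) = ∫_0^s e^{-v²} dv. -/
open MeasureTheory

lemma cusp_h_integrableOn (t c : ℝ) (ht : 0 < t) (hc : 1 ≤ c) :
    IntegrableOn (fun y : ℝ => y⁻¹ * Real.exp (-(Real.log y) ^ 2 / t)) (Set.Ioi c) := by
  have hc0 : (0 : ℝ) < c := lt_of_lt_of_le one_pos hc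
  have hmeas : AEStronglyMeasurable (fun y : ℝ => y⁻¹ * Real.exp (-(Real.log y) ^ 2 / t))
      (volume.restrict (Set.Ioi c)) := by
    apply ContinuousOn.aestronglyMeasurable _ measurableSet_Ioi
    intro y hy
    have hy0 : y ≠ 0 := (lt_of_lt_of_le hc0 (le_of_lt hy)).ne'
    exact ((continuousAt_inv₀ hy0).mul
      ((Real.continuous_exp.continuousAt).comp
        (((Real.continuousAt_log hy0).pow 2).neg.div_const t))).continuousWithinAt
  have hbound : IntegrableOn (fun y : ℝ => Real.exp t * y ^ (-3 : ℝ)) (Set.Ioi c) :=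
    (integrableOn_Ioi_rpow_of_lt (by norm_num) hc0).const_mul _
  refine Integrable.mono' hbound hmeas ?_
  filter_upwards [ae_restrict_mem measurableSet_Ioi] with y hy
  have hy1 : (1 : ℝ) ≤ y := le_trans hc (le_of_lt hy)
  have hy0 : (0 : ℝ) < y := lt_of_lt_of_le one_pos hy1
  have key : -(Real.log y) ^ 2 / t ≤ t - 2 * Real.log y := by
    have hsq : 0 ≤ (Real.log y - t) ^ 2 := sq_nonneg _
    rw [div_le_iff₀ ht]
    nlinarith
  have hexp : Real.exp (-(Real.log y) ^ 2 / t) ≤ Real.exp t * y ^ (-2 : ℝ) := by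
    calc Real.exp (-(Real.log y) ^ 2 / t) ≤ Real.exp (t - 2 * Real.log y) :=
          Real.exp_le_exp.2 key
      _ = Real.exp t * y ^ (-2 : ℝ) := by
          rw [Real.exp_sub, Real.rpow_def_of_pos hy0, mul_comm (Real.log y)]
          rw [div_eq_mul_inv, ← Real.exp_neg]
          ring_nf
  rw [Real.norm_eq_abs, abs_of_nonneg (by positivity)]
  calc y⁻¹ * Real.exp (-(Real.log y) ^ 2 / t) ≤ y⁻¹ * (Real.exp t * y ^ (-2 : ℝ)) :=
        mul_le_mul_of_nonneg_left hexp (by positivity)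
    _ = Real.exp t * y ^ (-3 : ℝ) := by
        rw [show (-3 : ℝ) = -1 + -2 by norm_num, Real.rpow_add hy0, Real.rpow_neg_one]
        ring

/-- The relative heat trace of `e^{-tΔ_{a,0}} - e^{-tΔ_{1,0}}` on `L²([a,∞), y⁻²dy)`,
expressed via the error function `Erf s = ∫_0^s e^{-v²} dv`. -/
theorem relative_heat_trace_cusp_erf (a t : ℝ) (ha : 1 < a) (ht : 0 < t) :
    ((∫ y in Set.Ioi a, (cuspHeatKernel a y y t - cuspHeatKernel 1 y y t) / y ^ 2) =
      -(Real.exp (-t / 4) / Real.sqrt (4 * Real.pi * t)) *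
        ∫ y in (1:ℝ)..a, y⁻¹ * Real.exp (-(Real.log y) ^ 2 / t)) ∧
    ((∫ y in Set.Ioi a, (cuspHeatKernel a y y t - cuspHeatKernel 1 y y t) / y ^ 2) =
      -(Real.exp (-t / 4) / Real.sqrt (4 * Real.pi)) *
        ∫ v in (0:ℝ)..(Real.log a / Real.sqrt t), Real.exp (-v ^ 2)) := by
  have ha0 : (0 : ℝ) < a := lt_trans one_pos ha
  set C : ℝ := Real.exp (-t / 4) / Real.sqrt (4 * Real.pi * t) with hCdef
  set h : ℝ → ℝ := fun y => y⁻¹ * Real.exp (-(Real.log y) ^ 2 / t) with hhdef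
  clear_value C
  -- pointwise identity on Ioi a
  have key : ∀ y ∈ Set.Ioi a, (cuspHeatKernel a y y t - cuspHeatKernel 1 y y t) / y ^ 2
      = C * (h y - a⁻¹ * h (y / a)) := by
    intro y hy
    have hay : a ≤ y := le_of_lt hy
    have h1y : (1 : ℝ) ≤ y := le_trans (le_of_lt ha) hay
    have hy0 : (0 : ℝ) < y := lt_of_lt_of_le one_pos h1y
    have hsqrt : Real.sqrt (y * y) = y := Real.sqrt_mul_self (le_of_lt hy0)
    have hlogyy : Real.log (y / y) = 0 := by
      rw [div_self hy0.ne']; exact Real.log_one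
    have hlogmul : Real.log (y * y) = 2 * Real.log y := by
      rw [Real.log_mul hy0.ne' hy0.ne']; ring
    have hloga2 : Real.log (a ^ 2) = 2 * Real.log a := by
      rw [Real.log_pow]; push_cast; ring
    have hlog12 : Real.log ((1:ℝ) ^ 2) = 0 := by norm_num
    rw [cuspHeatKernel, cuspHeatKernel, if_pos ⟨hay, hay⟩, if_pos ⟨h1y, h1y⟩, ← hCdef]
    rw [hsqrt, hlogyy, hlogmul, hloga2, hlog12]
    have e1 : -(2 * Real.log y - 2 * Real.log a) ^ 2 / (4 * t)
        = -(Real.log y - Real.log a) ^ 2 / t := by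
      field_simp; ring
    have e2 : -(2 * Real.log y - 0) ^ 2 / (4 * t) = -(Real.log y) ^ 2 / t := by
      field_simp; ring
    have e3 : Real.log (y / a) = Real.log y - Real.log a := Real.log_div hy0.ne' ha0.ne'
    have e0 : -(0:ℝ) ^ 2 / (4 * t) = 0 := by norm_num
    rw [e1, e2, e0, Real.exp_zero]
    simp only [hhdef, e3]
    have hya : (y / a)⁻¹ = a * y⁻¹ := by
      rw [inv_div]; ring
    rw [hya]
    field_simp
    ring
  -- rewrite the integral
  have hrw : (∫ y in Set.Ioi a, (cuspHeatKernel a y y t - cuspHeatKernel 1 y y t) / y ^ 2)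
      = ∫ y in Set.Ioi a, C * (h y - a⁻¹ * h (y / a)) :=
    setIntegral_congr_fun measurableSet_Ioi key
  -- integrability
  have hint1 : IntegrableOn h (Set.Ioi 1) := cusp_h_integrableOn t 1 ht le_rfl
  have hinta : IntegrableOn h (Set.Ioi a) := hint1.mono_set (Set.Ioi_subset_Ioi (le_of_lt ha))
  have hcomp : (∫ y in Set.Ioi a, h (y / a)) = a * ∫ y in Set.Ioi 1, h y := by
    have h1 := MeasureTheory.integral_comp_mul_right_Ioi h a (inv_pos.mpr ha0)
    simp only [smul_eq_mul, inv_inv, mul_inv_cancel₀ ha0.ne'] at h1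
    simpa only [div_eq_mul_inv] using h1
  have hintcomp : IntegrableOn (fun y => h (y / a)) (Set.Ioi a) := by
    have h2 : IntegrableOn (fun y => h (y * a⁻¹)) (Set.Ioi a) := by
      rw [MeasureTheory.integrableOn_Ioi_comp_mul_right_iff h a (inv_pos.mpr ha0),
        mul_inv_cancel₀ ha0.ne']
      exact hint1
    simpa only [div_eq_mul_inv] using h2
  have hsplit : (∫ y in Set.Ioi 1, h y)
      = (∫ y in Set.Ioc 1 a, h y) + ∫ y in Set.Ioi a, h y := by
    rw [← setIntegral_union (Set.Ioc_disjoint_Ioi le_rfl) measurableSet_Ioi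
      (hint1.mono_set Set.Ioc_subset_Ioi_self) hinta,
      Set.Ioc_union_Ioi_eq_Ioi (le_of_lt ha)]
  -- main computation
  have hmain : (∫ y in Set.Ioi a, (cuspHeatKernel a y y t - cuspHeatKernel 1 y y t) / y ^ 2)
      = -C * ∫ y in Set.Ioc 1 a, h y := by
    rw [hrw, integral_const_mul, integral_sub hinta (hintcomp.const_mul _),
      integral_const_mul, hcomp, inv_mul_cancel_left₀ ha0.ne', hsplit]
    ring
  have hIoc : (∫ y in Set.Ioc 1 a, h y) = ∫ y in (1:ℝ)..a, h y :=
    (intervalIntegral.integral_of_le (le_of_lt ha)).symm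
  constructor
  · rw [hmain, hIoc]
  · rw [hmain, hIoc]
    -- substitution u = log y
    have hsub1 : (∫ y in (1:ℝ)..a, h y)
        = ∫ u in (0:ℝ)..(Real.log a), Real.exp (-u ^ 2 / t) := by
      have h4 := intervalIntegral.integral_comp_smul_deriv
        (f := Real.log) (f' := fun y => y⁻¹) (g := fun u => Real.exp (-u ^ 2 / t))
        (a := 1) (b := a)
        (fun x hx => by
          have hx1 : (1 : ℝ) ≤ x := by
            rw [Set.uIcc_of_le (le_of_lt ha)] at hx
            exact hx.1
          exact Real.hasDerivAt_log (by linarith))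
        (fun x hx => by
          rw [Set.uIcc_of_le (le_of_lt ha)] at hx
          have hx0 : x ≠ 0 := by
            rintro rfl; rcases hx with ⟨hx1, _⟩; norm_num at hx1
          exact (continuousAt_inv₀ hx0).continuousWithinAt)
        (Real.continuous_exp.comp ((continuous_pow 2).neg.div_const t))
      simpa [Real.log_one, smul_eq_mul] using h4
    -- substitution v = u / √t
    have hst : (0 : ℝ) < Real.sqrt t := Real.sqrt_pos.mpr ht
    have hsub2 : (∫ u in (0:ℝ)..(Real.log a), Real.exp (-u ^ 2 / t))
        = Real.sqrt t * ∫ v in (0:ℝ)..(Real.log a / Real.sqrt t), Real.exp (-v ^ 2) := by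
      have hdiv := intervalIntegral.integral_comp_div (a := 0) (b := Real.log a)
        (c := Real.sqrt t) (fun v => Real.exp (-v ^ 2)) hst.ne'
      have heq : ∀ u : ℝ, Real.exp (-(u / Real.sqrt t) ^ 2) = Real.exp (-u ^ 2 / t) := by
        intro u
        congr 1
        rw [div_pow, Real.sq_sqrt (le_of_lt ht)]
        ring
      simp only [heq] at hdiv
      rw [hdiv]
      simp [smul_eq_mul]
    rw [hsub1, hsub2]
    have hC : C * Real.sqrt t = Real.exp (-t / 4) / Real.sqrt (4 * Real.pi) := by
      rw [hCdef, Real.sqrt_mul (by positivity) t]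
      field_simp
    rw [← hC]
    ring
end

section
/- With notation as above, as t → 0⁺, ∫_a^∞ (p_a(y,y,t) - p_1(y,y,t)) y^{-2} dy = -1/4 + O(√t). -/
open MeasureTheory Asymptotics

section Aux

open Real Set Filter

/-- Pointwise exponential bound used for integrability. -/
lemma cuspAux_exp_sq_le (t c u : ℝ) (ht : 0 < t) :
    Real.exp (-(1/t) * (u - c) ^ 2) ≤ Real.exp (c + t/4) * Real.exp (-u) := by
  rw [← Real.exp_add, Real.exp_le_exp]
  have h : u - c - t/4 ≤ (u - c)^2 / t := by
    rw [le_div_iff₀ ht]; nlinarith [sq_nonneg (u - c - t/2)]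
  have : -(1/t) * (u - c)^2 = -((u - c)^2 / t) := by field_simp
  linarith

/-- Integrability of a Gaussian of the logarithm against `y⁻¹ dy`. -/
lemma cuspAux_intOn_gauss_log (t c a : ℝ) (ht : 0 < t) (ha : 1 < a) :
    IntegrableOn (fun y : ℝ => Real.exp (-(1/t) * (Real.log y - c) ^ 2) * y⁻¹) (Ioi a) := by
  have ha0 : (0:ℝ) < a := by linarith
  have hmeas : AEStronglyMeasurable (fun y : ℝ => Real.exp (-(1/t) * (Real.log y - c) ^ 2) * y⁻¹)
      (volume.restrict (Ioi a)) := by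
    apply ContinuousOn.aestronglyMeasurable _ measurableSet_Ioi
    have hsub : Ioi a ⊆ {x : ℝ | x ≠ 0} := fun x hx => ne_of_gt (lt_trans ha0 hx)
    apply ContinuousOn.mul
    · exact Real.continuous_exp.comp_continuousOn <| continuousOn_const.mul
        (((Real.continuousOn_log.mono hsub).sub continuousOn_const).pow 2)
    · exact continuousOn_inv₀.mono hsub
  refine Integrable.mono' ((integrableOn_Ioi_rpow_of_lt (by norm_num : (-2:ℝ) < -1) ha0).const_mul
      (Real.exp (c + t/4))) hmeas ?_
  filter_upwards [ae_restrict_mem measurableSet_Ioi] with y hy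
  have hy0 : (0:ℝ) < y := lt_trans ha0 hy
  have h1 : Real.exp (-(1/t) * (Real.log y - c) ^ 2) ≤ Real.exp (c + t/4) * y⁻¹ := by
    have := cuspAux_exp_sq_le t c (Real.log y) ht
    rwa [Real.exp_neg, Real.exp_log hy0] at this
  rw [norm_mul, norm_of_nonneg (Real.exp_pos _).le, norm_of_nonneg (inv_nonneg.mpr hy0.le)]
  calc Real.exp (-(1/t) * (Real.log y - c) ^ 2) * y⁻¹ ≤ (Real.exp (c + t/4) * y⁻¹) * y⁻¹ := by
        exact mul_le_mul_of_nonneg_right h1 (inv_nonneg.mpr hy0.le)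
    _ = Real.exp (c + t/4) * y ^ (-2:ℝ) := by
        rw [Real.rpow_neg hy0.le, show ((2:ℝ)) = ((2:ℕ):ℝ) by norm_num,
          Real.rpow_natCast, sq, mul_inv, mul_assoc]

/-- Pointwise evaluation of the relative diagonal heat kernel. -/
lemma cuspAux_kernel_eval (a t y : ℝ) (ha : 1 < a) (ht : 0 < t) (hy : a < y) :
    (cuspHeatKernel a y y t - cuspHeatKernel 1 y y t) / y ^ 2
      = (Real.exp (-t/4) / Real.sqrt (4*Real.pi*t)) *
        ((Real.exp (-(1/t) * (Real.log y) ^ 2)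
          - Real.exp (-(1/t) * (Real.log y - Real.log a) ^ 2)) * y⁻¹) := by
  have hy0 : (0:ℝ) < y := by linarith
  have hyne : y ≠ 0 := hy0.ne'
  rw [cuspHeatKernel, cuspHeatKernel, if_pos ⟨hy.le, hy.le⟩, if_pos ⟨by linarith, by linarith⟩]
  rw [Real.sqrt_mul_self hy0.le, div_self hyne, Real.log_one, Real.log_mul hyne hyne,
    Real.log_pow, Real.log_pow, Real.log_one]
  have e1 : -(Real.log y + Real.log y - (2:ℕ) * Real.log a) ^ 2 / (4 * t)
      = -(1/t) * (Real.log y - Real.log a) ^ 2 := by field_simp; ring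
  have e2 : -(Real.log y + Real.log y - (2:ℕ) * (0:ℝ)) ^ 2 / (4 * t)
      = -(1/t) * (Real.log y) ^ 2 := by field_simp; ring
  rw [e1, e2]
  norm_num
  field_simp
  ring

/-- Change of variables `u = log y` and translation, evaluating the integral. -/
lemma cuspAux_integral_eval (a t : ℝ) (ha : 1 < a) (ht : 0 < t) :
    (∫ y in Ioi a, (cuspHeatKernel a y y t - cuspHeatKernel 1 y y t) / y ^ 2)
      = (Real.exp (-t/4) / Real.sqrt (4*Real.pi*t)) *
        ((∫ u in Ioi (Real.log a), Real.exp (-(1/t) * u ^ 2))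
          - Real.sqrt (Real.pi*t) / 2) := by
  rw [setIntegral_congr_fun measurableSet_Ioi
    (fun y hy => cuspAux_kernel_eval a t y ha ht hy), integral_const_mul]
  congr 1
  have ha0 : (0:ℝ) < a := by linarith
  set L := Real.log a with hL
  have hb : 0 < 1/t := by positivity
  have g1 : Integrable (fun u : ℝ => Real.exp (-(1/t) * u ^ 2)) := integrable_exp_neg_mul_sq hb
  have g2 : Integrable (fun u : ℝ => Real.exp (-(1/t) * (u - L) ^ 2)) := g1.comp_sub_right L
  set G : ℝ → ℝ := fun u => Real.exp (-(1/t) * u ^ 2) - Real.exp (-(1/t) * (u - L) ^ 2) with hG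
  have hsub : Ici a ⊆ {x : ℝ | x ≠ 0} := fun x hx => ne_of_gt (lt_of_lt_of_le ha0 hx)
  have cov : (∫ x in Ioi a, (G ∘ Real.log) x * x⁻¹) = ∫ u in Ioi L, G u := by
    rw [hL]
    refine integral_comp_mul_deriv_Ioi (Real.continuousOn_log.mono hsub)
      Real.tendsto_log_atTop (fun x hx => (Real.hasDerivAt_log
        (ne_of_gt (lt_trans ha0 hx))).hasDerivWithinAt) ?_ ?_ ?_
    · exact (Continuous.sub (by fun_prop) (by fun_prop)).continuousOn
    · exact (g1.sub g2).integrableOn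
    · rw [integrableOn_Ici_iff_integrableOn_Ioi]
      have h0 := cuspAux_intOn_gauss_log t 0 a ht ha
      have hLi := cuspAux_intOn_gauss_log t L a ht ha
      have : (fun x : ℝ => (G ∘ Real.log) x * x⁻¹)
          = fun y : ℝ => Real.exp (-(1/t) * (Real.log y - 0) ^ 2) * y⁻¹
            - Real.exp (-(1/t) * (Real.log y - L) ^ 2) * y⁻¹ := by
        funext y; simp only [hG, Function.comp, sub_zero]; ring
      rw [this]
      exact h0.sub hLi
  have hGeq : (fun y : ℝ => (Real.exp (-(1/t) * (Real.log y) ^ 2)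
          - Real.exp (-(1/t) * (Real.log y - L) ^ 2)) * y⁻¹)
      = fun x : ℝ => (G ∘ Real.log) x * x⁻¹ := by
    funext y; simp only [hG, Function.comp]
  rw [hGeq, cov, hG]
  rw [integral_sub g1.integrableOn g2.integrableOn]
  have trans : ∫ u in Ioi L, Real.exp (-(1/t) * (u - L) ^ 2)
      = ∫ u in Ioi (0:ℝ), Real.exp (-(1/t) * u ^ 2) := by
    have h := (measurePreserving_add_right volume L).setIntegral_image_emb
      (MeasurableEquiv.addRight L).measurableEmbedding
      (fun u => Real.exp (-(1/t) * (u - L) ^ 2)) (Ioi 0)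
    simpa [image_add_const_Ioi] using h
  have hpt : Real.pi / (1/t) = Real.pi * t := by field_simp
  rw [trans, integral_gaussian_Ioi, hpt]

set_option maxHeartbeats 1000000 in
/-- Quantitative bound on the evaluated expression. -/
lemma cuspAux_bound (a t : ℝ) (ha : 1 < a) (ht : 0 < t) (ht1 : t ≤ 1) :
    |(Real.exp (-t/4) / Real.sqrt (4*Real.pi*t)) *
      ((∫ u in Ioi (Real.log a), Real.exp (-(1/t) * u ^ 2)) - Real.sqrt (Real.pi*t)/2) + 1/4|
      ≤ (1 + 1/(Real.log a)^2) * Real.sqrt t := by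
  set L := Real.log a with hL
  have hL0 : 0 < L := Real.log_pos ha
  set C := Real.exp (-t/4) / Real.sqrt (4*Real.pi*t) with hC
  set T := ∫ u in Ioi L, Real.exp (-(1/t) * u ^ 2) with hT
  have hsqrt0 : 0 < Real.sqrt (4*Real.pi*t) := by
    apply Real.sqrt_pos.mpr; positivity
  have hsq : Real.sqrt (4*Real.pi*t) = 2 * Real.sqrt (Real.pi*t) := by
    rw [show 4*Real.pi*t = 2^2*(Real.pi*t) by ring,
      Real.sqrt_mul (by positivity), Real.sqrt_sq (by norm_num)]
  have hCS : C * (Real.sqrt (Real.pi*t)/2) = Real.exp (-t/4) / 4 := by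
    have hpt0 : 0 < Real.sqrt (Real.pi*t) := Real.sqrt_pos.mpr (by positivity)
    rw [hC, hsq]; field_simp; ring
  have hC0 : 0 < C := by rw [hC]; positivity
  have hg2 : Integrable (fun u : ℝ => Real.exp (-(1/(2*t)) * u ^ 2)) :=
    integrable_exp_neg_mul_sq (by positivity)
  have hg1 : Integrable (fun u : ℝ => Real.exp (-(1/t) * u ^ 2)) :=
    integrable_exp_neg_mul_sq (by positivity)
  have hT0 : 0 ≤ T := setIntegral_nonneg measurableSet_Ioi (fun u _ => (Real.exp_pos _).le)
  set X := L^2/(2*t) with hX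
  have hX0 : 0 < X := by rw [hX]; positivity
  have hTle : T ≤ Real.exp (-X) * (Real.sqrt (4*Real.pi*t) / 2) := by
    have step1 : T ≤ ∫ u in Ioi L, Real.exp (-X) * Real.exp (-(1/(2*t)) * u ^ 2) := by
      refine setIntegral_mono_on hg1.integrableOn ((hg2.const_mul _).integrableOn)
        measurableSet_Ioi (fun u hu => ?_)
      rw [← Real.exp_add, Real.exp_le_exp, hX]
      have hu' : L ≤ u := le_of_lt hu
      have h2 : L^2 ≤ u^2 := by nlinarith
      have key : -(L^2/(2*t)) + -(1/(2*t))*u^2 - (-(1/t)*u^2) = (u^2 - L^2)/(2*t) := by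
        field_simp; ring
      have key2 : 0 ≤ (u^2 - L^2)/(2*t) := div_nonneg (by linarith) (by linarith)
      linarith
    have step2 : (∫ u in Ioi L, Real.exp (-X) * Real.exp (-(1/(2*t)) * u ^ 2))
        = Real.exp (-X) * ∫ u in Ioi L, Real.exp (-(1/(2*t)) * u ^ 2) :=
      integral_const_mul _ _
    have step3 : (∫ u in Ioi L, Real.exp (-(1/(2*t)) * u ^ 2))
        ≤ ∫ u in Ioi (0:ℝ), Real.exp (-(1/(2*t)) * u ^ 2) :=
      setIntegral_mono_set hg2.integrableOn
        (Filter.Eventually.of_forall fun u => (Real.exp_pos _).le)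
        (HasSubset.Subset.eventuallyLE (Ioi_subset_Ioi hL0.le))
    have step4 : (∫ u in Ioi (0:ℝ), Real.exp (-(1/(2*t)) * u ^ 2))
        ≤ Real.sqrt (4*Real.pi*t) / 2 := by
      rw [integral_gaussian_Ioi]
      apply div_le_div_of_nonneg_right _ (by norm_num)
      apply Real.sqrt_le_sqrt
      rw [div_le_iff₀ (by positivity)]
      have : 4*Real.pi*t*(1/(2*t)) = 2*Real.pi := by field_simp; ring
      rw [this]
      nlinarith [Real.pi_pos]
    calc T ≤ _ := step1
      _ = _ := step2
      _ ≤ Real.exp (-X) * (Real.sqrt (4*Real.pi*t) / 2) := by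
          exact mul_le_mul_of_nonneg_left (step3.trans step4) (Real.exp_pos _).le
  have hCT : C * T ≤ Real.sqrt t / L^2 := by
    have hCle : C ≤ 1 / Real.sqrt (4*Real.pi*t) := by
      rw [hC, div_le_div_iff₀ hsqrt0 hsqrt0]
      have : Real.exp (-t/4) ≤ 1 := by rw [Real.exp_le_one_iff]; linarith
      nlinarith
    have h2 : C * T ≤ (1 / Real.sqrt (4*Real.pi*t)) *
        (Real.exp (-X) * (Real.sqrt (4*Real.pi*t) / 2)) :=
      mul_le_mul hCle hTle hT0 (by positivity)
    have h3 : (1 / Real.sqrt (4*Real.pi*t)) *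
        (Real.exp (-X) * (Real.sqrt (4*Real.pi*t) / 2)) = Real.exp (-X) / 2 := by
      field_simp
    have hXexp : Real.exp (-X) ≤ 1/X := by
      rw [Real.exp_neg, one_div]
      have h4 : X ≤ Real.exp X := by
        have := Real.add_one_le_exp X; linarith
      exact inv_anti₀ hX0 h4
    have hXval : (1/X)/2 = t/L^2 := by
      rw [hX]; field_simp
    have htsqrt : t ≤ Real.sqrt t := by
      nlinarith [Real.sq_sqrt ht.le, Real.sqrt_nonneg t, Real.sqrt_le_one.mpr ht1]
    calc C * T ≤ Real.exp (-X) / 2 := by rw [← h3]; exact h2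
      _ ≤ (1/X)/2 := by linarith
      _ = t/L^2 := hXval
      _ ≤ Real.sqrt t / L^2 := by
          apply div_le_div_of_nonneg_right htsqrt (by positivity)
  have hsplit : C * (T - Real.sqrt (Real.pi*t)/2) = C*T - Real.exp (-t/4)/4 := by
    rw [mul_sub, hCS]
  have hE : 1 - Real.exp (-t/4) ≤ t/4 := by
    have := Real.add_one_le_exp (-t/4); linarith
  have hE0 : Real.exp (-t/4) ≤ 1 := by rw [Real.exp_le_one_iff]; linarith
  have hCT0 : 0 ≤ C * T := mul_nonneg hC0.le hT0
  have htsqrt : t ≤ Real.sqrt t := by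
    nlinarith [Real.sq_sqrt ht.le, Real.sqrt_nonneg t, Real.sqrt_le_one.mpr ht1]
  have hrw : Real.sqrt t / L^2 = 1/L^2 * Real.sqrt t := by ring
  rw [hsplit, abs_le]
  rw [hrw] at hCT
  have hL2 : 0 ≤ 1/L^2 * Real.sqrt t := by positivity
  constructor <;> nlinarith [Real.sqrt_nonneg t]

end Aux

/-- As `t → 0⁺`, the relative heat trace on `L²([a,∞), y⁻²dy)` equals `-1/4 + O(√t)`. -/
theorem relative_heat_trace_cusp_asymptotics (a : ℝ) (ha : 1 < a) :
    (fun t : ℝ =>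
        (∫ y in Set.Ioi a, (cuspHeatKernel a y y t - cuspHeatKernel 1 y y t) / y ^ 2)
          - (-1/4)) =O[nhdsWithin 0 (Set.Ioi 0)] fun t => Real.sqrt t := by
  rw [Asymptotics.isBigO_iff]
  refine ⟨1 + 1/(Real.log a)^2, ?_⟩
  filter_upwards [Ioo_mem_nhdsGT_of_mem (Set.mem_Ico.mpr ⟨le_refl (0:ℝ), zero_lt_one⟩)]
    with t htm
  obtain ⟨ht, ht1⟩ := htm
  rw [Real.norm_eq_abs, Real.norm_eq_abs, abs_of_nonneg (Real.sqrt_nonneg t)]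
  rw [cuspAux_integral_eval a t ha ht]
  have hb := cuspAux_bound a t ha ht ht1.le
  calc |(Real.exp (-t/4) / Real.sqrt (4*Real.pi*t)) *
      ((∫ u in Set.Ioi (Real.log a), Real.exp (-(1/t) * u ^ 2))
        - Real.sqrt (Real.pi*t)/2) - (-1/4)|
      = |(Real.exp (-t/4) / Real.sqrt (4*Real.pi*t)) *
      ((∫ u in Set.Ioi (Real.log a), Real.exp (-(1/t) * u ^ 2))
        - Real.sqrt (Real.pi*t)/2) + 1/4| := by congr 1; ring
    _ ≤ (1 + 1/(Real.log a)^2) * Real.sqrt t := hb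
end

section
/- Let c > 0 and 0 < s ≤ 1. Then ∫_1^∞ ∫_1^∞ s^{-2} (y')^{-1} y^{-2} (exp(-(4c/s)(log(y/y'))²) + exp(-(4c/s)(log(y y'))²)) dy' dy ≤ C s^{-3/2} for a constant C depending only on c. -/
open MeasureTheory Real

/-- full-line Gaussian integrability, shifted -/
lemma gauss_shift_integrable (a b : ℝ) (ha : 0 < a) :
    Integrable (fun u : ℝ => Real.exp (-a * (b - u) ^ 2)) := by
  have h := (integrable_exp_neg_mul_sq ha).comp_sub_right b
  have : (fun u : ℝ => Real.exp (-a * (u - b) ^ 2))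
      = (fun u : ℝ => Real.exp (-a * (b - u) ^ 2)) := by
    funext u; ring_nf
  rwa [this] at h

lemma gauss_half_le (a b : ℝ) (ha : 0 < a) :
    ∫ u in Set.Ioi (0:ℝ), Real.exp (-a * (b - u) ^ 2) ≤ Real.sqrt (π / a) := by
  have hInt := gauss_shift_integrable a b ha
  have h1 : ∫ u in Set.Ioi (0:ℝ), Real.exp (-a * (b - u) ^ 2)
      ≤ ∫ u : ℝ, Real.exp (-a * (b - u) ^ 2) :=
    setIntegral_le_integral hInt (Filter.Eventually.of_forall fun u => (Real.exp_pos _).le)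
  have h2 : ∫ u : ℝ, Real.exp (-a * (b - u) ^ 2) = Real.sqrt (π / a) := by
    have : (fun u : ℝ => Real.exp (-a * (b - u) ^ 2))
        = (fun u : ℝ => Real.exp (-a * (u - b) ^ 2)) := by funext u; ring_nf
    rw [this]
    rw [show (fun u : ℝ => Real.exp (-a * (u - b) ^ 2))
        = (fun u : ℝ => (fun v : ℝ => Real.exp (-a * v ^ 2)) (u - b)) from rfl]
    rw [integral_sub_right_eq_self (fun v : ℝ => Real.exp (-a * v ^ 2)) b]
    exact integral_gaussian a
  linarith

lemma exp_image_Ioi : Real.exp '' Set.Ioi (0:ℝ) = Set.Ioi (1:ℝ) := by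
  ext x
  constructor
  · rintro ⟨u, hu, rfl⟩
    have := Real.exp_lt_exp.mpr hu
    simpa [Real.exp_zero] using this
  · intro hx
    exact ⟨Real.log x, Real.log_pos hx, Real.exp_log (lt_trans one_pos hx)⟩

lemma subst_eq (a b : ℝ) :
    ∫ y' in Set.Ioi (1:ℝ), y'⁻¹ * Real.exp (-a * (b - Real.log y') ^ 2)
      = ∫ u in Set.Ioi (0:ℝ), Real.exp (-a * (b - u) ^ 2) := by
  have hderiv : ∀ u ∈ Set.Ioi (0:ℝ),
      HasDerivWithinAt Real.exp (Real.exp u) (Set.Ioi (0:ℝ)) u :=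
    fun u _ => (Real.hasDerivAt_exp u).hasDerivWithinAt
  have h := integral_image_eq_integral_abs_deriv_smul measurableSet_Ioi hderiv
    (Real.exp_injective.injOn) (fun y' => y'⁻¹ * Real.exp (-a * (b - Real.log y') ^ 2))
  rw [exp_image_Ioi] at h
  rw [h]
  apply setIntegral_congr_fun measurableSet_Ioi
  intro u _
  simp [Real.log_exp, Real.abs_exp, smul_eq_mul]

lemma subst_integrable (a b : ℝ) (ha : 0 < a) :
    IntegrableOn (fun y' => y'⁻¹ * Real.exp (-a * (b - Real.log y') ^ 2))
      (Set.Ioi (1:ℝ)) := by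
  have hderiv : ∀ u ∈ Set.Ioi (0:ℝ),
      HasDerivWithinAt Real.exp (Real.exp u) (Set.Ioi (0:ℝ)) u :=
    fun u _ => (Real.hasDerivAt_exp u).hasDerivWithinAt
  have h := integrableOn_image_iff_integrableOn_abs_deriv_smul measurableSet_Ioi hderiv
    (Real.exp_injective.injOn) (fun y' => y'⁻¹ * Real.exp (-a * (b - Real.log y') ^ 2))
  rw [exp_image_Ioi] at h
  rw [h]
  apply ((gauss_shift_integrable a b ha).integrableOn (s := Set.Ioi 0)).congr_fun _
    measurableSet_Ioi
  intro u _
  simp [Real.log_exp, Real.abs_exp, smul_eq_mul]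

theorem double_integral_HS_bound (c : ℝ) (hc : 0 < c) :
    ∃ C > (0:ℝ), ∀ s : ℝ, 0 < s → s ≤ 1 →
      (∫ y in Set.Ioi (1:ℝ), ∫ y' in Set.Ioi (1:ℝ),
          s ^ (-2 : ℝ) * y'⁻¹ * y ^ (-2 : ℝ) *
            (Real.exp (-(4 * c / s) * (Real.log (y / y')) ^ 2) +
              Real.exp (-(4 * c / s) * (Real.log (y * y')) ^ 2))) ≤
        C * s ^ (-(3:ℝ) / 2) := by
  refine ⟨2 * Real.sqrt (π / (4 * c)), by positivity, ?_⟩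
  intro s hs hs1
  set a : ℝ := 4 * c / s with ha_def
  have ha : 0 < a := by positivity
  -- inner bound
  have inner_bd : ∀ y ∈ Set.Ioi (1:ℝ),
      (∫ y' in Set.Ioi (1:ℝ),
          s ^ (-2 : ℝ) * y'⁻¹ * y ^ (-2 : ℝ) *
            (Real.exp (-a * (Real.log (y / y')) ^ 2) +
              Real.exp (-a * (Real.log (y * y')) ^ 2)))
      ≤ (s ^ (-2:ℝ) * y ^ (-2:ℝ)) * (2 * Real.sqrt (π / a)) := by
    intro y hy
    have hy1 : (1:ℝ) < y := hy
    have hy0 : (0:ℝ) < y := lt_trans one_pos hy1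
    have key : (∫ y' in Set.Ioi (1:ℝ),
          s ^ (-2 : ℝ) * y'⁻¹ * y ^ (-2 : ℝ) *
            (Real.exp (-a * (Real.log (y / y')) ^ 2) +
              Real.exp (-a * (Real.log (y * y')) ^ 2)))
        = (s ^ (-2:ℝ) * y ^ (-2:ℝ)) * ∫ y' in Set.Ioi (1:ℝ),
            (y'⁻¹ * Real.exp (-a * (Real.log y - Real.log y') ^ 2)
              + y'⁻¹ * Real.exp (-a * (-Real.log y - Real.log y') ^ 2)) := by
      rw [← integral_const_mul]
      apply setIntegral_congr_fun measurableSet_Ioi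
      intro y' hy'
      have hy'0 : (0:ℝ) < y' := lt_trans one_pos hy'
      dsimp only
      rw [Real.log_div (ne_of_gt hy0) (ne_of_gt hy'0), Real.log_mul (ne_of_gt hy0) (ne_of_gt hy'0)]
      have : (Real.log y + Real.log y') ^ 2 = (-Real.log y - Real.log y') ^ 2 := by ring
      rw [this]; ring
    rw [key]
    have hsum : ∫ y' in Set.Ioi (1:ℝ),
            (y'⁻¹ * Real.exp (-a * (Real.log y - Real.log y') ^ 2)
              + y'⁻¹ * Real.exp (-a * (-Real.log y - Real.log y') ^ 2))
        = (∫ y' in Set.Ioi (1:ℝ), y'⁻¹ * Real.exp (-a * (Real.log y - Real.log y') ^ 2))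
          + ∫ y' in Set.Ioi (1:ℝ), y'⁻¹ * Real.exp (-a * (-Real.log y - Real.log y') ^ 2) :=
      integral_add (subst_integrable a (Real.log y) ha)
        (subst_integrable a (-Real.log y) ha)
    rw [hsum]
    have h1 : (∫ y' in Set.Ioi (1:ℝ), y'⁻¹ * Real.exp (-a * (Real.log y - Real.log y') ^ 2))
        ≤ Real.sqrt (π / a) := by
      rw [subst_eq a (Real.log y)]; exact gauss_half_le a (Real.log y) ha
    have h2 : (∫ y' in Set.Ioi (1:ℝ), y'⁻¹ * Real.exp (-a * (-Real.log y - Real.log y') ^ 2))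
        ≤ Real.sqrt (π / a) := by
      rw [subst_eq a (-Real.log y)]; exact gauss_half_le a (-Real.log y) ha
    have hpos : (0:ℝ) ≤ s ^ (-2:ℝ) * y ^ (-2:ℝ) := by positivity
    nlinarith [hpos]
  -- outer bound
  have houter : (∫ y in Set.Ioi (1:ℝ), ∫ y' in Set.Ioi (1:ℝ),
          s ^ (-2 : ℝ) * y'⁻¹ * y ^ (-2 : ℝ) *
            (Real.exp (-a * (Real.log (y / y')) ^ 2) +
              Real.exp (-a * (Real.log (y * y')) ^ 2)))
      ≤ ∫ y in Set.Ioi (1:ℝ), (s ^ (-2:ℝ) * (2 * Real.sqrt (π / a))) * y ^ (-2:ℝ) := by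
    apply integral_mono_of_nonneg
    · filter_upwards [ae_restrict_mem measurableSet_Ioi] with y hy
      have hy0 : (0:ℝ) < y := lt_trans one_pos hy
      apply setIntegral_nonneg measurableSet_Ioi
      intro y' hy'
      have hy'0 : (0:ℝ) < y' := lt_trans one_pos hy'
      positivity
    · exact (integrableOn_Ioi_rpow_of_lt (by norm_num) one_pos).const_mul _
    · filter_upwards [ae_restrict_mem measurableSet_Ioi] with y hy
      calc (∫ y' in Set.Ioi (1:ℝ),
          s ^ (-2 : ℝ) * y'⁻¹ * y ^ (-2 : ℝ) *
            (Real.exp (-a * (Real.log (y / y')) ^ 2) +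
              Real.exp (-a * (Real.log (y * y')) ^ 2)))
          ≤ (s ^ (-2:ℝ) * y ^ (-2:ℝ)) * (2 * Real.sqrt (π / a)) := inner_bd y hy
        _ = (s ^ (-2:ℝ) * (2 * Real.sqrt (π / a))) * y ^ (-2:ℝ) := by ring
  refine le_trans houter ?_
  rw [integral_const_mul, integral_Ioi_rpow_of_lt (by norm_num) one_pos]
  have h1 : -(1:ℝ) ^ ((-2:ℝ)+1) / ((-2:ℝ)+1) = 1 := by norm_num
  rw [h1, mul_one]
  have hπa : Real.sqrt (π / a) = Real.sqrt (π/(4*c)) * Real.sqrt s := by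
    rw [← Real.sqrt_mul (by positivity) s]
    congr 1
    rw [ha_def]
    field_simp
  rw [hπa, Real.sqrt_eq_rpow s]
  have h2 : s ^ (-2:ℝ) * s ^ ((1:ℝ)/2) = s ^ (-(3:ℝ)/2) := by
    rw [← Real.rpow_add hs]; norm_num
  calc s ^ (-2:ℝ) * (2 * (Real.sqrt (π/(4*c)) * s ^ ((1:ℝ)/2)))
      = 2 * Real.sqrt (π/(4*c)) * (s ^ (-2:ℝ) * s ^ ((1:ℝ)/2)) := by ring
    _ = 2 * Real.sqrt (π/(4*c)) * s ^ (-(3:ℝ)/2) := by rw [h2]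
    _ ≤ 2 * Real.sqrt (π/(4*c)) * s ^ (-(3:ℝ)/2) := le_rfl
end
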